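/- Reduction of the Lamé system to a weakly coupled elliptic system: Let Ω ⊂ ℝ² be a domain and let λ, μ ∈ C²(Ω) with μ > 0 and λ + 2μ > 0 on Ω. Suppose w = (w₁,w₂) ∈ C²(Ω;ℝ²) and f ∈ C³(Ω;ℝ) satisfy in Ω: (i) (λ + 2μ) Δf + (λ + μ) div w + 2(∇μ, ∇f) = 0; (ii) μ Δw + M(w,f) = 0, where M(w,f) = −(∇μ) div w + ( (∇μ,∇w₁), (∇μ,∇w₂) ) + ( (∇μ, ∂_{x₁}w), (∇μ, ∂_{x₂}w) ) + 2 ((λ+μ)/(λ+2μ)) (∇μ) div w − 2( (∂_{x₁}∇μ, ∇f), (∂_{x₂}∇μ, ∇f) ) + 4 (∇μ) (∇μ,∇f)/(λ+2μ). Then u = w + ∇f solves the Lamé system 𝓛_{μ,λ}u = 0 in Ω, i.e. for k = 1,2: Σ_{j=1}² ∂_{x_j}( μ (∂_{x_j}u_k + ∂_{x_k}u_j) ) + ∂_{x_k}( λ div u ) = 0 in Ω. -/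

import Mathlib

/-!
Expanding the Lamé operator by the product rule, its component along a direction `a` (with `b`
the other basis direction) is
`μ Δu_a + (λ+μ) ∂_a div u + ∂_aλ div u + 2 ∂_aμ ∂_a u_a + ∂_bμ (∂_b u_a + ∂_a u_b)`.
For `u = w + ∇f` we have `div u = div w + Δf` and `Δu_a = Δw_a + ∂_a Δf`. The derivative of (i)
along `a` trades the third-order terms `(λ+2μ) ∂_a Δf + (λ+μ) ∂_a div w` for lower-order ones, and
(i) itself gives `Δf = -((λ+μ) div w + 2(∇μ,∇f)) / (λ+2μ)`; what remains is `μ Δw_a + M_a(w,f)`.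
The computation only uses the directions `a`, `b` formally, so swapping the two basis vectors
gives the second component from the first.
-/

open Set

noncomputable section

/-- Partial derivative `∂/∂x₁`. -/
def pd1 (f : ℝ × ℝ → ℝ) : ℝ × ℝ → ℝ := fun x => fderiv ℝ f x (1, 0)

/-- Partial derivative `∂/∂x₂`. -/
def pd2 (f : ℝ × ℝ → ℝ) : ℝ × ℝ → ℝ := fun x => fderiv ℝ f x (0, 1)

/-- The displacement component `u₁ = w₁ + ∂₁ f`. -/
def lu1 (w1 f : ℝ × ℝ → ℝ) : ℝ × ℝ → ℝ := fun x => w1 x + pd1 f x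

/-- The displacement component `u₂ = w₂ + ∂₂ f`. -/
def lu2 (w2 f : ℝ × ℝ → ℝ) : ℝ × ℝ → ℝ := fun x => w2 x + pd2 f x

open Filter Topology

section DirectionalDerivative

variable {E : Type*} [NormedAddCommGroup E] [NormedSpace ℝ E]

def dirDeriv (v : E) (g : E → ℝ) : E → ℝ := fun x => fderiv ℝ g x v

variable {g h : E → ℝ} {x : E} {m n : WithTop ℕ∞}

theorem dirDeriv_add (v : E) (hg : DifferentiableAt ℝ g x) (hh : DifferentiableAt ℝ h x) :
    dirDeriv v (fun y => g y + h y) x = dirDeriv v g x + dirDeriv v h x := by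
  simp [dirDeriv, fderiv_fun_add hg hh]

theorem dirDeriv_mul (v : E) (hg : DifferentiableAt ℝ g x) (hh : DifferentiableAt ℝ h x) :
    dirDeriv v (fun y => g y * h y) x = dirDeriv v g x * h x + g x * dirDeriv v h x := by
  simp [dirDeriv, fderiv_fun_mul hg hh]
  ring

theorem dirDeriv_const (v : E) (c : ℝ) : dirDeriv v (fun _ => c) x = 0 := by
  simp [dirDeriv]

theorem Filter.EventuallyEq.dirDeriv_eq (v : E) (hgh : g =ᶠ[𝓝 x] h) :
    dirDeriv v g x = dirDeriv v h x := by
  simp only [dirDeriv, hgh.fderiv_eq]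

theorem dirDeriv_eq_zero_of_eventually_eq_zero (v : E) (hg : ∀ᶠ y in 𝓝 x, g y = 0) :
    dirDeriv v g x = 0 :=
  (Filter.EventuallyEq.dirDeriv_eq v hg).trans (dirDeriv_const v 0)

theorem ContDiffAt.contDiffAt_dirDeriv (v : E) (hg : ContDiffAt ℝ n g x) (hmn : m + 1 ≤ n) :
    ContDiffAt ℝ m (dirDeriv v g) x :=
  (hg.fderiv_right hmn).clm_apply contDiffAt_const

theorem ContDiffAt.differentiableAt_dirDeriv (v : E) (hg : ContDiffAt ℝ n g x) (hn : 2 ≤ n) :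
    DifferentiableAt ℝ (dirDeriv v g) x :=
  (hg.contDiffAt_dirDeriv v (m := 1) hn).differentiableAt one_ne_zero

theorem ContDiffAt.dirDeriv_dirDeriv_eq_fderiv_fderiv (hg : ContDiffAt ℝ 2 g x) (v w : E) :
    dirDeriv v (dirDeriv w g) x = fderiv ℝ (fderiv ℝ g) x v w := by
  have hd : DifferentiableAt ℝ (fderiv ℝ g) x :=
    (hg.fderiv_right (m := 1) le_rfl).differentiableAt one_ne_zero
  change fderiv ℝ (fun y => fderiv ℝ g y w) x v = _
  simp [fderiv_clm_apply hd (differentiableAt_const w)]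

theorem ContDiffAt.dirDeriv_comm (hg : ContDiffAt ℝ 2 g x) (v w : E) :
    dirDeriv v (dirDeriv w g) x = dirDeriv w (dirDeriv v g) x := by
  rw [hg.dirDeriv_dirDeriv_eq_fderiv_fderiv, hg.dirDeriv_dirDeriv_eq_fderiv_fderiv,
    hg.isSymmSndFDerivAt (by simp)]

theorem ContDiffAt.dirDeriv_dirDeriv_dirDeriv_comm (hg : ContDiffAt ℝ 3 g x) (u v w : E) :
    dirDeriv u (dirDeriv v (dirDeriv w g)) x = dirDeriv w (dirDeriv u (dirDeriv v g)) x := by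
  have hvw : dirDeriv v (dirDeriv w g) =ᶠ[𝓝 x] dirDeriv w (dirDeriv v g) :=
    (hg.eventually (by simp)).mono fun y hy => (hy.of_le (by norm_num)).dirDeriv_comm v w
  rw [hvw.dirDeriv_eq, (hg.contDiffAt_dirDeriv v (m := 2) le_rfl).dirDeriv_comm]

theorem ContDiffAt.dirDeriv_dirDeriv_add (hg : ContDiffAt ℝ 2 g x) (hh : ContDiffAt ℝ 2 h x)
    (v w : E) :
    dirDeriv v (dirDeriv w (fun y => g y + h y)) x
      = dirDeriv v (dirDeriv w g) x + dirDeriv v (dirDeriv w h) x := by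
  have hsum : dirDeriv w (fun y => g y + h y) =ᶠ[𝓝 x] fun y => dirDeriv w g y + dirDeriv w h y :=
    ((hg.eventually (by simp)).and (hh.eventually (by simp))).mono fun y hy =>
      dirDeriv_add w (hy.1.differentiableAt two_ne_zero) (hy.2.differentiableAt two_ne_zero)
  rw [hsum.dirDeriv_eq, dirDeriv_add v (hg.differentiableAt_dirDeriv w le_rfl)
    (hh.differentiableAt_dirDeriv w le_rfl)]

end DirectionalDerivative

section Lame

variable {E : Type*} [NormedAddCommGroup E] [NormedSpace ℝ E]

/-- `ua`, `ub` are the components of `u` along `a`, `b`; for `(a, b) = (e₁, e₂)` and `(e₂, e₁)`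
this is the first and the second component of `𝓛_{μ,λ} u`. -/
def lameComponent (a b : E) (lam μ ua ub : E → ℝ) (x : E) : ℝ :=
  dirDeriv a (fun y => μ y * (dirDeriv a ua y + dirDeriv a ua y)) x
    + dirDeriv b (fun y => μ y * (dirDeriv b ua y + dirDeriv a ub y)) x
    + dirDeriv a (fun y => lam y * (dirDeriv a ua y + dirDeriv b ub y)) x

variable {lam μ ua ub wa wb f : E → ℝ} {x : E}

theorem lameComponent_eq (a b : E) (hlam : DifferentiableAt ℝ lam x)
    (hμ : DifferentiableAt ℝ μ x) (hua : ContDiffAt ℝ 2 ua x) (hub : ContDiffAt ℝ 2 ub x) :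
    lameComponent a b lam μ ua ub x
      = μ x * (dirDeriv a (dirDeriv a ua) x + dirDeriv b (dirDeriv b ua) x)
        + (lam x + μ x) * (dirDeriv a (dirDeriv a ua) x + dirDeriv a (dirDeriv b ub) x)
        + dirDeriv a lam x * (dirDeriv a ua x + dirDeriv b ub x)
        + 2 * dirDeriv a μ x * dirDeriv a ua x
        + dirDeriv b μ x * (dirDeriv b ua x + dirDeriv a ub x) := by
  have := hua.differentiableAt_dirDeriv a le_rfl
  have := hua.differentiableAt_dirDeriv b le_rfl
  have := hub.differentiableAt_dirDeriv a le_rfl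
  have := hub.differentiableAt_dirDeriv b le_rfl
  simp (disch := fun_prop) only [lameComponent, dirDeriv_mul, dirDeriv_add]
  rw [hub.dirDeriv_comm b a]
  ring

theorem dirDeriv_scalarEquation (a b : E) (hlam : DifferentiableAt ℝ lam x)
    (hμ : ContDiffAt ℝ 2 μ x) (hwa : ContDiffAt ℝ 2 wa x) (hwb : ContDiffAt ℝ 2 wb x)
    (hf : ContDiffAt ℝ 3 f x)
    (heqf : ∀ᶠ y in 𝓝 x,
      (lam y + 2 * μ y) * (dirDeriv a (dirDeriv a f) y + dirDeriv b (dirDeriv b f) y)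
        + (lam y + μ y) * (dirDeriv a wa y + dirDeriv b wb y)
        + 2 * (dirDeriv a μ y * dirDeriv a f y + dirDeriv b μ y * dirDeriv b f y) = 0) :
    (dirDeriv a lam x + 2 * dirDeriv a μ x)
        * (dirDeriv a (dirDeriv a f) x + dirDeriv b (dirDeriv b f) x)
      + (lam x + 2 * μ x)
        * (dirDeriv a (dirDeriv a (dirDeriv a f)) x + dirDeriv a (dirDeriv b (dirDeriv b f)) x)
      + (dirDeriv a lam x + dirDeriv a μ x) * (dirDeriv a wa x + dirDeriv b wb x)
      + (lam x + μ x) * (dirDeriv a (dirDeriv a wa) x + dirDeriv a (dirDeriv b wb) x)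
      + 2 * (dirDeriv a (dirDeriv a μ) x * dirDeriv a f x
        + dirDeriv a μ x * dirDeriv a (dirDeriv a f) x
        + dirDeriv a (dirDeriv b μ) x * dirDeriv b f x
        + dirDeriv b μ x * dirDeriv a (dirDeriv b f) x) = 0 := by
  have := hμ.differentiableAt two_ne_zero
  have := hμ.differentiableAt_dirDeriv a le_rfl
  have := hμ.differentiableAt_dirDeriv b le_rfl
  have := hwa.differentiableAt_dirDeriv a le_rfl
  have := hwb.differentiableAt_dirDeriv b le_rfl
  have := hf.differentiableAt_dirDeriv a (by norm_num)
  have := hf.differentiableAt_dirDeriv b (by norm_num)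
  have := (hf.contDiffAt_dirDeriv a (m := 2) le_rfl).differentiableAt_dirDeriv a le_rfl
  have := (hf.contDiffAt_dirDeriv b (m := 2) le_rfl).differentiableAt_dirDeriv b le_rfl
  have hzero := dirDeriv_eq_zero_of_eventually_eq_zero a heqf
  simp (disch := fun_prop) only [dirDeriv_mul, dirDeriv_add, dirDeriv_const] at hzero
  linear_combination hzero

theorem lameComponent_eq_zero_of_reducedSystem (a b : E) (hlam : DifferentiableAt ℝ lam x)
    (hμ : ContDiffAt ℝ 2 μ x) (hwa : ContDiffAt ℝ 2 wa x) (hwb : ContDiffAt ℝ 2 wb x)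
    (hf : ContDiffAt ℝ 3 f x) (hP : lam x + 2 * μ x ≠ 0)
    (heqf : ∀ᶠ y in 𝓝 x,
      (lam y + 2 * μ y) * (dirDeriv a (dirDeriv a f) y + dirDeriv b (dirDeriv b f) y)
        + (lam y + μ y) * (dirDeriv a wa y + dirDeriv b wb y)
        + 2 * (dirDeriv a μ y * dirDeriv a f y + dirDeriv b μ y * dirDeriv b f y) = 0)
    (heqw : μ x * (dirDeriv a (dirDeriv a wa) x + dirDeriv b (dirDeriv b wa) x)
        + (-(dirDeriv a μ x) * (dirDeriv a wa x + dirDeriv b wb x)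
            + (dirDeriv a μ x * dirDeriv a wa x + dirDeriv b μ x * dirDeriv b wa x)
            + (dirDeriv a μ x * dirDeriv a wa x + dirDeriv b μ x * dirDeriv a wb x)
            + 2 * ((lam x + μ x) / (lam x + 2 * μ x)) * dirDeriv a μ x
                * (dirDeriv a wa x + dirDeriv b wb x)
            - 2 * (dirDeriv a (dirDeriv a μ) x * dirDeriv a f x
                + dirDeriv a (dirDeriv b μ) x * dirDeriv b f x)
            + 4 * dirDeriv a μ x
                * (dirDeriv a μ x * dirDeriv a f x + dirDeriv b μ x * dirDeriv b f x)
                / (lam x + 2 * μ x)) = 0) :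
    lameComponent a b lam μ (fun z => wa z + dirDeriv a f z) (fun z => wb z + dirDeriv b f z) x
      = 0 := by
  have hfa : ContDiffAt ℝ 2 (dirDeriv a f) x := hf.contDiffAt_dirDeriv a le_rfl
  have hfb : ContDiffAt ℝ 2 (dirDeriv b f) x := hf.contDiffAt_dirDeriv b le_rfl
  have := hwa.differentiableAt two_ne_zero
  have := hwb.differentiableAt two_ne_zero
  have := hfa.differentiableAt two_ne_zero
  have := hfb.differentiableAt two_ne_zero
  rw [lameComponent_eq a b hlam (hμ.differentiableAt two_ne_zero) (hwa.add hfa) (hwb.add hfb)]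
  simp (disch := assumption) only
    [hwa.dirDeriv_dirDeriv_add hfa, hwb.dirDeriv_dirDeriv_add hfb, dirDeriv_add]
  rw [hf.dirDeriv_dirDeriv_dirDeriv_comm b b a, (hf.of_le (by norm_num)).dirDeriv_comm b a]
  have hdiff := dirDeriv_scalarEquation a b hlam hμ hwa hwb hf heqf
  have hf0 := heqf.self_of_nhds
  have hfrac : 2 * ((lam x + μ x) / (lam x + 2 * μ x)) * dirDeriv a μ x
        * (dirDeriv a wa x + dirDeriv b wb x)
      + 4 * dirDeriv a μ x * (dirDeriv a μ x * dirDeriv a f x + dirDeriv b μ x * dirDeriv b f x)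
        / (lam x + 2 * μ x)
      = -2 * dirDeriv a μ x * (dirDeriv a (dirDeriv a f) x + dirDeriv b (dirDeriv b f) x) := by
    field_simp
    linear_combination 2 * dirDeriv a μ x * hf0
  linear_combination heqw + hdiff - hfrac

end Lame

theorem lame_reduction_general
    (Ω : Set (ℝ × ℝ)) (hopen : IsOpen Ω)
    (lam μ w1 w2 f : ℝ × ℝ → ℝ)
    (hlam : ContDiffOn ℝ 2 lam Ω) (hμ : ContDiffOn ℝ 2 μ Ω)
    (hlampos : ∀ x ∈ Ω, 0 < lam x + 2 * μ x)
    (hw1 : ContDiffOn ℝ 2 w1 Ω) (hw2 : ContDiffOn ℝ 2 w2 Ω)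
    (hf : ContDiffOn ℝ 3 f Ω)
    (heqf : ∀ x ∈ Ω,
      (lam x + 2 * μ x) * (pd1 (pd1 f) x + pd2 (pd2 f) x)
        + (lam x + μ x) * (pd1 w1 x + pd2 w2 x)
        + 2 * (pd1 μ x * pd1 f x + pd2 μ x * pd2 f x) = 0)
    (heqw1 : ∀ x ∈ Ω,
      μ x * (pd1 (pd1 w1) x + pd2 (pd2 w1) x)
        + (-(pd1 μ x) * (pd1 w1 x + pd2 w2 x)
            + (pd1 μ x * pd1 w1 x + pd2 μ x * pd2 w1 x)
            + (pd1 μ x * pd1 w1 x + pd2 μ x * pd1 w2 x)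
            + 2 * ((lam x + μ x) / (lam x + 2 * μ x)) * pd1 μ x
                * (pd1 w1 x + pd2 w2 x)
            - 2 * (pd1 (pd1 μ) x * pd1 f x + pd1 (pd2 μ) x * pd2 f x)
            + 4 * pd1 μ x * (pd1 μ x * pd1 f x + pd2 μ x * pd2 f x)
                / (lam x + 2 * μ x)) = 0)
    (heqw2 : ∀ x ∈ Ω,
      μ x * (pd1 (pd1 w2) x + pd2 (pd2 w2) x)
        + (-(pd2 μ x) * (pd1 w1 x + pd2 w2 x)
            + (pd1 μ x * pd1 w2 x + pd2 μ x * pd2 w2 x)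
            + (pd1 μ x * pd2 w1 x + pd2 μ x * pd2 w2 x)
            + 2 * ((lam x + μ x) / (lam x + 2 * μ x)) * pd2 μ x
                * (pd1 w1 x + pd2 w2 x)
            - 2 * (pd2 (pd1 μ) x * pd1 f x + pd2 (pd2 μ) x * pd2 f x)
            + 4 * pd2 μ x * (pd1 μ x * pd1 f x + pd2 μ x * pd2 f x)
                / (lam x + 2 * μ x)) = 0) :
    (∀ x ∈ Ω,
      pd1 (fun y => μ y * (pd1 (lu1 w1 f) y + pd1 (lu1 w1 f) y)) x
        + pd2 (fun y => μ y * (pd2 (lu1 w1 f) y + pd1 (lu2 w2 f) y)) x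
        + pd1 (fun y => lam y * (pd1 (lu1 w1 f) y + pd2 (lu2 w2 f) y)) x = 0) ∧
    (∀ x ∈ Ω,
      pd1 (fun y => μ y * (pd1 (lu2 w2 f) y + pd2 (lu1 w1 f) y)) x
        + pd2 (fun y => μ y * (pd2 (lu2 w2 f) y + pd2 (lu2 w2 f) y)) x
        + pd2 (fun y => lam y * (pd1 (lu1 w1 f) y + pd2 (lu2 w2 f) y)) x = 0) := by
  have hpd1 : pd1 = dirDeriv (1, 0) := rfl
  have hpd2 : pd2 = dirDeriv (0, 1) := rfl
  have hu1 : lu1 w1 f = fun z => w1 z + dirDeriv (1, 0) f z := rfl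
  have hu2 : lu2 w2 f = fun z => w2 z + dirDeriv (0, 1) f z := rfl
  simp only [hu1, hu2, hpd1, hpd2] at heqf heqw1 heqw2 ⊢
  refine ⟨fun x hx => ?_, fun x hx => ?_⟩ <;> have hΩ := hopen.mem_nhds hx
  · exact lameComponent_eq_zero_of_reducedSystem (1, 0) (0, 1)
      ((hlam.contDiffAt hΩ).differentiableAt two_ne_zero) (hμ.contDiffAt hΩ)
      (hw1.contDiffAt hΩ) (hw2.contDiffAt hΩ) (hf.contDiffAt hΩ) (hlampos x hx).ne'
      (eventually_of_mem hΩ heqf) (heqw1 x hx)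
  · have h := lameComponent_eq_zero_of_reducedSystem (0, 1) (1, 0)
      ((hlam.contDiffAt hΩ).differentiableAt two_ne_zero) (hμ.contDiffAt hΩ)
      (hw2.contDiffAt hΩ) (hw1.contDiffAt hΩ) (hf.contDiffAt hΩ) (hlampos x hx).ne'
      (eventually_of_mem hΩ fun y hy => by linear_combination heqf y hy)
      (by linear_combination heqw2 x hx)
    rw [lameComponent] at h
    -- `h` has the divergence in the order `∂₂u₂ + ∂₁u₁`
    simp only [add_comm (dirDeriv (1, 0) (fun z => w1 z + dirDeriv (1, 0) f z) _)]
    linear_combination h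

/-- **Reduction of the Lamé system to a weakly coupled elliptic system**
(Proposition 7.1): if `(w, f)` satisfies
`(λ+2μ)Δf + (λ+μ)div w + 2(∇μ,∇f) = 0` and `μΔw + M(w,f) = 0`,
then `u = w + ∇f` solves the Lamé system `𝓛_{μ,λ}u = 0` in `Ω`. -/
theorem lame_reduction
    (Ω : Set (ℝ × ℝ)) (hopen : IsOpen Ω) (hconn : IsConnected Ω)
    (lam μ w1 w2 f : ℝ × ℝ → ℝ)
    (hlam : ContDiffOn ℝ 2 lam Ω) (hμ : ContDiffOn ℝ 2 μ Ω)
    (hμpos : ∀ x ∈ Ω, 0 < μ x) (hlampos : ∀ x ∈ Ω, 0 < lam x + 2 * μ x)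
    (hw1 : ContDiffOn ℝ 2 w1 Ω) (hw2 : ContDiffOn ℝ 2 w2 Ω)
    (hf : ContDiffOn ℝ 3 f Ω)
    (heqf : ∀ x ∈ Ω,
      (lam x + 2 * μ x) * (pd1 (pd1 f) x + pd2 (pd2 f) x)
        + (lam x + μ x) * (pd1 w1 x + pd2 w2 x)
        + 2 * (pd1 μ x * pd1 f x + pd2 μ x * pd2 f x) = 0)
    (heqw1 : ∀ x ∈ Ω,
      μ x * (pd1 (pd1 w1) x + pd2 (pd2 w1) x)
        + (-(pd1 μ x) * (pd1 w1 x + pd2 w2 x)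
            + (pd1 μ x * pd1 w1 x + pd2 μ x * pd2 w1 x)
            + (pd1 μ x * pd1 w1 x + pd2 μ x * pd1 w2 x)
            + 2 * ((lam x + μ x) / (lam x + 2 * μ x)) * pd1 μ x
                * (pd1 w1 x + pd2 w2 x)
            - 2 * (pd1 (pd1 μ) x * pd1 f x + pd1 (pd2 μ) x * pd2 f x)
            + 4 * pd1 μ x * (pd1 μ x * pd1 f x + pd2 μ x * pd2 f x)
                / (lam x + 2 * μ x)) = 0)
    (heqw2 : ∀ x ∈ Ω,
      μ x * (pd1 (pd1 w2) x + pd2 (pd2 w2) x)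
        + (-(pd2 μ x) * (pd1 w1 x + pd2 w2 x)
            + (pd1 μ x * pd1 w2 x + pd2 μ x * pd2 w2 x)
            + (pd1 μ x * pd2 w1 x + pd2 μ x * pd2 w2 x)
            + 2 * ((lam x + μ x) / (lam x + 2 * μ x)) * pd2 μ x
                * (pd1 w1 x + pd2 w2 x)
            - 2 * (pd2 (pd1 μ) x * pd1 f x + pd2 (pd2 μ) x * pd2 f x)
            + 4 * pd2 μ x * (pd1 μ x * pd1 f x + pd2 μ x * pd2 f x)
                / (lam x + 2 * μ x)) = 0) :
    (∀ x ∈ Ω,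
      pd1 (fun y => μ y * (pd1 (lu1 w1 f) y + pd1 (lu1 w1 f) y)) x
        + pd2 (fun y => μ y * (pd2 (lu1 w1 f) y + pd1 (lu2 w2 f) y)) x
        + pd1 (fun y => lam y * (pd1 (lu1 w1 f) y + pd2 (lu2 w2 f) y)) x = 0) ∧
    (∀ x ∈ Ω,
      pd1 (fun y => μ y * (pd1 (lu2 w2 f) y + pd2 (lu1 w1 f) y)) x
        + pd2 (fun y => μ y * (pd2 (lu2 w2 f) y + pd2 (lu2 w2 f) y)) x
        + pd2 (fun y => lam y * (pd1 (lu1 w1 f) y + pd2 (lu2 w2 f) y)) x = 0) :=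
  lame_reduction_general Ω hopen lam μ w1 w2 f hlam hμ hlampos hw1 hw2 hf heqf heqw1 heqw2

end
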